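/- arXiv:1307.4382 — 5 statements merged into one kernel-verified Lean document; each statement's English description precedes it below -/
import Mathlib

section
/- Let X and Y be real Banach spaces and let B be the closed unit ball of X. Suppose A ≥ 0 is such that every 1-affine function f : B → Y admits an affine function a : B → Y with ‖f(x) − a(x)‖ ≤ A for all x ∈ B. Then every quasilinear map F : X → Y with constant 1 admits a (not necessarily continuous) linear map L : X → Y such that ‖F(x) − L(x)‖ ≤ A‖x‖ for every x ∈ X. (In other words, K(X,Y) ≤ A(B,Y).) -/
open Finset

variable {X Y : Type*} [NormedAddCommGroup X] [NormedSpace ℝ X] [CompleteSpace X]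
  [NormedAddCommGroup Y] [NormedSpace ℝ Y] [CompleteSpace Y]

/-- `F : X → Y` is quasilinear with constant `Q`: it is homogeneous and
`‖F (x + y) - F x - F y‖ ≤ Q * (‖x‖ + ‖y‖)` for all `x y`. -/
def IsQuasilinearWith (Q : ℝ) (F : X → Y) : Prop :=
  (∀ (c : ℝ) (x : X), F (c • x) = c • F x) ∧
    ∀ x y : X, ‖F (x + y) - F x - F y‖ ≤ Q * (‖x‖ + ‖y‖)

/-- `f` is `δ`-affine on the closed unit ball of `X`. -/
def IsDeltaAffineOnBall (δ : ℝ) (f : X → Y) : Prop :=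
  ∀ x y : X, ‖x‖ ≤ 1 → ‖y‖ ≤ 1 → ∀ t : ℝ, 0 ≤ t → t ≤ 1 →
    ‖f (t • x + (1 - t) • y) - t • f x - (1 - t) • f y‖ ≤ δ

/-- `a` is affine on the closed unit ball of `X`. -/
def IsAffineOnBall (a : X → Y) : Prop :=
  ∀ x y : X, ‖x‖ ≤ 1 → ‖y‖ ≤ 1 → ∀ t : ℝ, 0 ≤ t → t ≤ 1 →
    a (t • x + (1 - t) • y) = t • a x + (1 - t) • a y

/-- `K(X,Y) ≤ A(B,Y)`. -/
theorem K_le_A (A : ℝ) (hA : 0 ≤ A)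
    (hyp : ∀ f : X → Y, IsDeltaAffineOnBall 1 f →
      ∃ a : X → Y, IsAffineOnBall a ∧ ∀ x : X, ‖x‖ ≤ 1 → ‖f x - a x‖ ≤ A)
    (F : X → Y) (hF : IsQuasilinearWith 1 F) :
    ∃ L : X →ₗ[ℝ] Y, ∀ x : X, ‖F x - L x‖ ≤ A * ‖x‖ := by
  obtain ⟨hhom, hq⟩ := hF
  have hF0 : F 0 = 0 := by
    have := hhom 0 0; simpa using this
  have hFneg : ∀ x : X, F (-x) = -F x := by
    intro x; have := hhom (-1) x; simpa using this
  -- F is 1-affine on the ball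
  have haff : IsDeltaAffineOnBall 1 F := by
    intro x y hx hy t ht ht1
    have h1 : F (t • x) = t • F x := hhom t x
    have h2 : F ((1 - t) • y) = (1 - t) • F y := hhom (1 - t) y
    have h3 := hq (t • x) ((1 - t) • y)
    rw [h1, h2] at h3
    refine h3.trans ?_
    have : ‖t • x‖ + ‖(1 - t) • y‖ ≤ 1 := by
      rw [norm_smul, norm_smul, Real.norm_eq_abs, Real.norm_eq_abs,
        abs_of_nonneg ht, abs_of_nonneg (by linarith)]
      nlinarith [norm_nonneg x, norm_nonneg y]
    linarith
  obtain ⟨a, ha, hab⟩ := hyp F haff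
  set b : X → Y := fun x => (2⁻¹ : ℝ) • (a x - a (-x)) with hbdef
  have hb0 : b 0 = 0 := by simp [hbdef]
  have hbneg : ∀ x : X, b (-x) = -b x := by
    intro x; simp only [hbdef, neg_neg]
    module
  have hbsmul : ∀ (t : ℝ) (x : X), 0 ≤ t → t ≤ 1 → ‖x‖ ≤ 1 → b (t • x) = t • b x := by
    intro t x ht ht1 hx
    have h1 := ha x 0 hx (by simp) t ht ht1
    have h2 := ha (-x) 0 (by simpa using hx) (by simp) t ht ht1
    simp only [smul_zero, add_zero] at h1 h2
    have hnx : -(t • x) = t • (-x) := (smul_neg t x).symm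
    simp only [hbdef, h1, hnx, h2]
    module
  have hbadd : ∀ x y : X, ‖x‖ ≤ 1 → ‖y‖ ≤ 1 → ‖x + y‖ ≤ 1 → b (x + y) = b x + b y := by
    intro x y hx hy hxy
    have half : ((2 : ℝ)⁻¹) • (x + y) = (2⁻¹ : ℝ) • x + (1 - 2⁻¹ : ℝ) • y := by
      rw [smul_add]; norm_num
    have h1 := ha x y hx hy 2⁻¹ (by norm_num) (by norm_num)
    have h2 := ha (-x) (-y) (by simpa using hx) (by simpa using hy) 2⁻¹ (by norm_num) (by norm_num)
    have h3 : b ((2⁻¹ : ℝ) • (x + y)) = (2⁻¹ : ℝ) • b (x + y) :=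
      hbsmul 2⁻¹ (x + y) (by norm_num) (by norm_num) hxy
    have h4 : b ((2⁻¹ : ℝ) • (x + y)) = (2⁻¹ : ℝ) • (b x + b y) := by
      rw [half]
      simp only [hbdef]
      have hneg : -((2⁻¹ : ℝ) • x + (1 - 2⁻¹ : ℝ) • y) = (2⁻¹ : ℝ) • (-x) + (1 - 2⁻¹ : ℝ) • (-y) := by
        rw [smul_neg, smul_neg]; abel
      rw [hneg, h1, h2]
      module
    have := h3.symm.trans h4
    have h5 : b (x + y) = (2 : ℝ) • ((2⁻¹ : ℝ) • (b x + b y)) := by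
      rw [← this, smul_smul]; norm_num
    rw [h5, smul_smul]; norm_num
  set L : X → Y := fun x => ‖x‖ • b (‖x‖⁻¹ • x) with hLdef
  have hL0 : L 0 = 0 := by simp [hLdef]
  have hscale : ∀ (x : X) (r : ℝ), ‖x‖ ≤ r → 0 < r → L x = r • b (r⁻¹ • x) := by
    intro x r hxr hr
    rcases eq_or_ne x 0 with rfl | hx
    · simp [hL0, hb0]
    · have hxn : 0 < ‖x‖ := norm_pos_iff.mpr hx
      have hu : ‖(‖x‖⁻¹ : ℝ) • x‖ = 1 := by
        rw [norm_smul, Real.norm_eq_abs, abs_of_pos (by positivity)]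
        field_simp
      have hr' : (r⁻¹ : ℝ) • x = (r⁻¹ * ‖x‖) • ((‖x‖⁻¹ : ℝ) • x) := by
        rw [smul_smul]; congr 1; field_simp
      have ht0 : (0:ℝ) ≤ r⁻¹ * ‖x‖ := by positivity
      have ht1 : r⁻¹ * ‖x‖ ≤ 1 := by
        rw [inv_mul_le_iff₀ hr]; simpa using hxr
      have hsc : ‖x‖ = r * (r⁻¹ * ‖x‖) := by
        rw [← mul_assoc, mul_inv_cancel₀ hr.ne', one_mul]
      calc L x = ‖x‖ • b (‖x‖⁻¹ • x) := rfl
        _ = (r * (r⁻¹ * ‖x‖)) • b (‖x‖⁻¹ • x) := by rw [← hsc]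
        _ = r • ((r⁻¹ * ‖x‖) • b (‖x‖⁻¹ • x)) := mul_smul _ _ _
        _ = r • b ((r⁻¹ * ‖x‖) • (‖x‖⁻¹ • x)) := by
              rw [hbsmul _ _ ht0 ht1 (le_of_eq hu)]
        _ = r • b (r⁻¹ • x) := by rw [← hr']
  have hLadd : ∀ x y : X, L (x + y) = L x + L y := by
    intro x y
    rcases eq_or_ne x 0 with rfl | hx
    · simp [hL0]
    rcases eq_or_ne y 0 with rfl | hy
    · simp [hL0]
    have hxn : 0 < ‖x‖ := norm_pos_iff.mpr hx
    have hyn : 0 < ‖y‖ := norm_pos_iff.mpr hy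
    set r : ℝ := ‖x‖ + ‖y‖ with hrdef
    have hr : 0 < r := by positivity
    have h1 : L (x + y) = r • b (r⁻¹ • (x + y)) :=
      hscale (x + y) r ((norm_add_le x y).trans le_rfl) hr
    have h2 : L x = r • b (r⁻¹ • x) := hscale x r (le_add_of_nonneg_right hyn.le) hr
    have h3 : L y = r • b (r⁻¹ • y) := hscale y r (le_add_of_nonneg_left hxn.le) hr
    have hnx : ‖(r⁻¹ : ℝ) • x‖ ≤ 1 := by
      rw [norm_smul, Real.norm_eq_abs, abs_of_pos (by positivity)]
      rw [inv_mul_le_iff₀ hr, mul_one]; exact le_add_of_nonneg_right hyn.le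
    have hny : ‖(r⁻¹ : ℝ) • y‖ ≤ 1 := by
      rw [norm_smul, Real.norm_eq_abs, abs_of_pos (by positivity)]
      rw [inv_mul_le_iff₀ hr, mul_one]; exact le_add_of_nonneg_left hxn.le
    have hnxy : ‖(r⁻¹ : ℝ) • x + (r⁻¹ : ℝ) • y‖ ≤ 1 := by
      rw [← smul_add, norm_smul, Real.norm_eq_abs, abs_of_pos (by positivity),
        inv_mul_le_iff₀ hr, mul_one]
      exact norm_add_le x y
    rw [h1, h2, h3, smul_add, hbadd _ _ hnx hny hnxy, smul_add]
  have hLsmul : ∀ (c : ℝ) (x : X), L (c • x) = c • L x := by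
    have hpos : ∀ (c : ℝ) (x : X), 0 < c → L (c • x) = c • L x := by
      intro c x hc
      rcases eq_or_ne x 0 with rfl | hx
      · simp [hL0]
      have hxn : 0 < ‖x‖ := norm_pos_iff.mpr hx
      have hnorm : ‖c • x‖ = c * ‖x‖ := by
        rw [norm_smul, Real.norm_eq_abs, abs_of_pos hc]
      have harg : ((c * ‖x‖)⁻¹ : ℝ) • (c • x) = (‖x‖⁻¹ : ℝ) • x := by
        rw [smul_smul]; congr 1
        rw [mul_inv]; field_simp
      calc L (c • x) = ‖c • x‖ • b (‖c • x‖⁻¹ • (c • x)) := rfl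
        _ = (c * ‖x‖) • b (((c * ‖x‖)⁻¹ : ℝ) • (c • x)) := by rw [hnorm]
        _ = (c * ‖x‖) • b ((‖x‖⁻¹ : ℝ) • x) := by rw [harg]
        _ = c • (‖x‖ • b ((‖x‖⁻¹ : ℝ) • x)) := mul_smul _ _ _
        _ = c • L x := rfl
    have hLneg : ∀ x : X, L (-x) = -L x := by
      intro x
      rw [hLdef]; simp only [norm_neg]
      have hn : (‖x‖⁻¹ : ℝ) • (-x) = -((‖x‖⁻¹ : ℝ) • x) := smul_neg _ _
      rw [hn, hbneg, smul_neg]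
    intro c x
    rcases lt_trichotomy c 0 with hc | rfl | hc
    · have h := hpos (-c) x (by linarith)
      have heq : c • x = -((-c) • x) := by rw [neg_smul, neg_neg]
      rw [heq, hLneg, h, neg_smul, neg_neg]
    · simp [hL0]
    · exact hpos c x hc
  refine ⟨⟨⟨L, hLadd⟩, fun c x => hLsmul c x⟩, ?_⟩
  intro x
  rcases eq_or_ne x 0 with rfl | hx
  · simp [hF0, hL0]
  have hxn : 0 < ‖x‖ := norm_pos_iff.mpr hx
  set u : X := (‖x‖⁻¹ : ℝ) • x with hudef
  have hu : ‖u‖ = 1 := by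
    rw [hudef, norm_smul, Real.norm_eq_abs, abs_of_pos (by positivity)]
    field_simp
  have hxu : x = ‖x‖ • u := by
    rw [hudef, smul_smul]
    rw [mul_inv_cancel₀ (ne_of_gt hxn), one_smul]
  have hFx : F x = ‖x‖ • F u := by rw [← hhom ‖x‖ u, ← hxu]
  have hLx : (⟨⟨L, hLadd⟩, fun c x => hLsmul c x⟩ : X →ₗ[ℝ] Y) x = ‖x‖ • b u := rfl
  have key : ‖F u - b u‖ ≤ A := by
    have h1 := hab u (le_of_eq hu)
    have h2 := hab (-u) (by simpa using le_of_eq hu)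
    rw [hFneg] at h2
    have heq : F u - b u = (2⁻¹ : ℝ) • ((F u - a u) - (-F u - a (-u))) := by
      simp only [hbdef]
      module
    rw [heq, norm_smul, Real.norm_eq_abs]
    have : ‖(F u - a u) - (-F u - a (-u))‖ ≤ A + A := by
      calc ‖(F u - a u) - (-F u - a (-u))‖ ≤ ‖F u - a u‖ + ‖-F u - a (-u)‖ := norm_sub_le _ _
        _ ≤ A + A := add_le_add h1 h2
    rw [abs_of_pos (by norm_num : (0:ℝ) < 2⁻¹)]
    linarith
  rw [hLx, hFx, ← smul_sub, norm_smul, Real.norm_eq_abs, abs_of_pos hxn, mul_comm]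
  exact mul_le_mul_of_nonneg_right key (le_of_lt hxn)
end

section
/- Let X and Y be real Banach spaces and let B be the closed unit ball of X. Suppose K ≥ 0 is such that every quasilinear map F : X → Y with constant 1 admits a (not necessarily continuous) linear map L : X → Y with ‖F(x) − L(x)‖ ≤ K‖x‖ for all x ∈ X. Then every 1-affine function f : B → Y admits an affine function a : B → Y such that ‖f(x) − a(x)‖ ≤ 3 + 6K for all x ∈ B. (In other words, A(B,Y) ≤ 3 + 6K(X,Y).) -/
open Finset

variable {X Y : Type*} [NormedAddCommGroup X] [NormedSpace ℝ X] [CompleteSpace X]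
  [NormedAddCommGroup Y] [NormedSpace ℝ Y] [CompleteSpace Y]

/-- `A(B,Y) ≤ 3 + 6·K(X,Y)`. -/
theorem A_le_three_add_six_K (K : ℝ) (hK : 0 ≤ K)
    (hyp : ∀ F : X → Y, IsQuasilinearWith 1 F →
      ∃ L : X →ₗ[ℝ] Y, ∀ x : X, ‖F x - L x‖ ≤ K * ‖x‖)
    (f : X → Y) (hf : IsDeltaAffineOnBall 1 f) :
    ∃ a : X → Y, IsAffineOnBall a ∧ ∀ x : X, ‖x‖ ≤ 1 → ‖f x - a x‖ ≤ 3 + 6 * K := by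
  classical
  set f₀ : X → Y := fun x => f x - f 0 with hf0def
  have hf₀aff : ∀ x y : X, ‖x‖ ≤ 1 → ‖y‖ ≤ 1 → ∀ t : ℝ, 0 ≤ t → t ≤ 1 →
      ‖f₀ (t • x + (1 - t) • y) - t • f₀ x - (1 - t) • f₀ y‖ ≤ 1 := by
    intro x y hx hy t ht0 ht1
    have h1 := hf x y hx hy t ht0 ht1
    have e : f₀ (t • x + (1 - t) • y) - t • f₀ x - (1 - t) • f₀ y
        = f (t • x + (1 - t) • y) - t • f x - (1 - t) • f y := by
      simp only [hf0def]
      module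
    rw [e]; exact h1
  have hf₀0 : f₀ 0 = 0 := by simp [hf0def]
  set h : X → Y := fun x => (2 : ℝ)⁻¹ • (f₀ x - f₀ (-x)) with hhdef
  have hh0 : h 0 = 0 := by simp [hhdef]
  have hodd : ∀ x : X, h (-x) = - h x := by
    intro x; simp only [hhdef, neg_neg]; module
  have hhalf : ∀ A B : Y, ‖A‖ ≤ 1 → ‖B‖ ≤ 1 → ‖(2 : ℝ)⁻¹ • (A - B)‖ ≤ 1 := by
    intro A B hA hB
    have hAB : ‖A - B‖ ≤ 2 := le_trans (norm_sub_le _ _) (by linarith)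
    have h2 : ‖((2 : ℝ)⁻¹)‖ = (2 : ℝ)⁻¹ := by norm_num [Real.norm_eq_abs]
    rw [norm_smul, h2]
    linarith
  have hhom : ∀ x : X, ‖x‖ ≤ 1 → ∀ r : ℝ, 0 ≤ r → r ≤ 1 →
      ‖h (r • x) - r • h x‖ ≤ 1 := by
    intro x hx r hr0 hr1
    have h1 : ‖f₀ (r • x) - r • f₀ x‖ ≤ 1 := by
      have := hf₀aff x 0 hx (by simp) r hr0 hr1
      have e : f₀ (r • x + (1 - r) • (0 : X)) - r • f₀ x - (1 - r) • f₀ 0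
          = f₀ (r • x) - r • f₀ x := by
        rw [hf₀0]; simp
      rw [e] at this; exact this
    have h2 : ‖f₀ (r • (-x)) - r • f₀ (-x)‖ ≤ 1 := by
      have := hf₀aff (-x) 0 (by simpa using hx) (by simp) r hr0 hr1
      have e : f₀ (r • (-x) + (1 - r) • (0 : X)) - r • f₀ (-x) - (1 - r) • f₀ 0
          = f₀ (r • (-x)) - r • f₀ (-x) := by
        rw [hf₀0]; simp
      rw [e] at this; exact this
    have e : h (r • x) - r • h x
        = (2 : ℝ)⁻¹ • ((f₀ (r • x) - r • f₀ x) - (f₀ (r • (-x)) - r • f₀ (-x))) := by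
      simp only [hhdef, smul_neg]
      module
    rw [e]; exact hhalf _ _ h1 h2
  have haff : ∀ x y : X, ‖x‖ ≤ 1 → ‖y‖ ≤ 1 → ∀ t : ℝ, 0 ≤ t → t ≤ 1 →
      ‖h (t • x + (1 - t) • y) - t • h x - (1 - t) • h y‖ ≤ 1 := by
    intro x y hx hy t ht0 ht1
    have h1 := hf₀aff x y hx hy t ht0 ht1
    have h2 := hf₀aff (-x) (-y) (by simpa using hx) (by simpa using hy) t ht0 ht1
    have eneg : t • (-x) + (1 - t) • (-y) = -(t • x + (1 - t) • y) := by module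
    rw [eneg] at h2
    have e : h (t • x + (1 - t) • y) - t • h x - (1 - t) • h y
        = (2 : ℝ)⁻¹ • ((f₀ (t • x + (1 - t) • y) - t • f₀ x - (1 - t) • f₀ y)
            - (f₀ (-(t • x + (1 - t) • y)) - t • f₀ (-x) - (1 - t) • f₀ (-y))) := by
      simp only [hhdef]
      module
    rw [e]; exact hhalf _ _ h1 h2
  set F : X → Y := fun x => if x = 0 then 0 else ‖x‖ • h (‖x‖⁻¹ • x) with hFdef
  have hF0 : F 0 = 0 := by simp [hFdef]
  have hFx : ∀ x : X, x ≠ 0 → F x = ‖x‖ • h (‖x‖⁻¹ • x) := by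
    intro x hx; simp [hFdef, hx]
  have hFneg : ∀ x : X, F (-x) = - F x := by
    intro x
    rcases eq_or_ne x 0 with rfl | hx0
    · simp [hF0]
    have hnx : ‖x‖ ≠ 0 := norm_ne_zero_iff.mpr hx0
    rw [hFx _ (neg_ne_zero.mpr hx0), hFx _ hx0]
    have e : ‖-x‖⁻¹ • (-x) = -(‖x‖⁻¹ • x) := by
      rw [norm_neg, smul_neg]
    rw [e, hodd, norm_neg, smul_neg]
  have hFhom : ∀ (c : ℝ) (x : X), F (c • x) = c • F x := by
    have hpos : ∀ (c : ℝ), 0 < c → ∀ x : X, x ≠ 0 → F (c • x) = c • F x := by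
      intro c hc x hx0
      have hnx : ‖x‖ ≠ 0 := norm_ne_zero_iff.mpr hx0
      have hcx : c • x ≠ 0 := smul_ne_zero (ne_of_gt hc) hx0
      rw [hFx _ hcx, hFx _ hx0]
      have hn : ‖c • x‖ = c * ‖x‖ := by
        rw [norm_smul, Real.norm_eq_abs, abs_of_pos hc]
      have e : ‖c • x‖⁻¹ • (c • x) = ‖x‖⁻¹ • x := by
        rw [hn, smul_smul]
        congr 1
        field_simp
      rw [e, hn]
      module
    intro c x
    rcases eq_or_ne x 0 with rfl | hx0
    · simp [hF0]
    rcases lt_trichotomy c 0 with hc | hc | hc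
    · have e : c • x = (-c) • (-x) := by module
      rw [e, hpos (-c) (by linarith) (-x) (neg_ne_zero.mpr hx0), hFneg]
      module
    · subst hc; simp [hF0]
    · exact hpos c hc x hx0
  have hFh : ∀ x : X, ‖x‖ ≤ 1 → ‖F x - h x‖ ≤ 1 := by
    intro x hx
    rcases eq_or_ne x 0 with rfl | hx0
    · simp [hF0, hh0]
    have hnx : (0 : ℝ) < ‖x‖ := norm_pos_iff.mpr hx0
    have hu : ‖‖x‖⁻¹ • x‖ ≤ 1 := by
      rw [norm_smul, norm_inv, Real.norm_eq_abs, abs_of_pos hnx,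
        inv_mul_cancel₀ hnx.ne']
    have key := hhom (‖x‖⁻¹ • x) hu ‖x‖ hnx.le hx
    have e : ‖x‖ • (‖x‖⁻¹ • x) = x := by
      rw [smul_smul, mul_inv_cancel₀ hnx.ne', one_smul]
    rw [e] at key
    rw [hFx _ hx0, norm_sub_rev]
    exact key
  have hfh : ∀ x : X, ‖x‖ ≤ 1 → ‖f₀ x - h x‖ ≤ 1 := by
    intro x hx
    have key := hf₀aff x (-x) hx (by simpa using hx) (2 : ℝ)⁻¹ (by norm_num) (by norm_num)
    have e0 : (2 : ℝ)⁻¹ • x + (1 - (2 : ℝ)⁻¹) • (-x) = 0 := by module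
    rw [e0, hf₀0] at key
    have e : f₀ x - h x
        = -((0 : Y) - (2 : ℝ)⁻¹ • f₀ x - (1 - (2 : ℝ)⁻¹) • f₀ (-x)) := by
      simp only [hhdef]
      module
    rw [e, norm_neg]
    exact key
  have hquas1 : ∀ x y : X, ‖x‖ + ‖y‖ = 1 → ‖F (x + y) - F x - F y‖ ≤ 2 := by
    intro x y hs
    rcases eq_or_ne x 0 with rfl | hx0
    · simp only [hF0, zero_add, sub_zero]
      simp only [sub_self, norm_zero]
      norm_num
    rcases eq_or_ne y 0 with rfl | hy0
    · simp only [hF0, add_zero, sub_zero]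
      simp only [sub_self, norm_zero, sub_zero]
      norm_num
    have hnx : (0 : ℝ) < ‖x‖ := norm_pos_iff.mpr hx0
    have hny : (0 : ℝ) < ‖y‖ := norm_pos_iff.mpr hy0
    have hu1 : ‖‖x‖⁻¹ • x‖ ≤ 1 := by
      rw [norm_smul, norm_inv, Real.norm_eq_abs, abs_of_pos hnx,
        inv_mul_cancel₀ hnx.ne']
    have hv1 : ‖‖y‖⁻¹ • y‖ ≤ 1 := by
      rw [norm_smul, norm_inv, Real.norm_eq_abs, abs_of_pos hny,
        inv_mul_cancel₀ hny.ne']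
    have h1mt : 1 - ‖x‖ = ‖y‖ := by linarith
    have hxy : x + y = ‖x‖ • (‖x‖⁻¹ • x) + (1 - ‖x‖) • (‖y‖⁻¹ • y) := by
      rw [h1mt, smul_smul, smul_smul, mul_inv_cancel₀ hnx.ne',
        mul_inv_cancel₀ hny.ne', one_smul, one_smul]
    have hA := haff (‖x‖⁻¹ • x) (‖y‖⁻¹ • y) hu1 hv1 ‖x‖ hnx.le (by linarith)
    rw [← hxy] at hA
    have hFxe : F x = ‖x‖ • h (‖x‖⁻¹ • x) := hFx x hx0
    have hFye : F y = (1 - ‖x‖) • h (‖y‖⁻¹ • y) := by rw [hFx y hy0, h1mt]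
    have hs1 : ‖x + y‖ ≤ 1 := le_trans (norm_add_le _ _) (le_of_eq hs)
    have hB := hFh (x + y) hs1
    calc ‖F (x + y) - F x - F y‖
        = ‖(F (x + y) - h (x + y))
            + (h (x + y) - ‖x‖ • h (‖x‖⁻¹ • x) - (1 - ‖x‖) • h (‖y‖⁻¹ • y))‖ := by
          rw [hFxe, hFye]; congr 1; abel
      _ ≤ ‖F (x + y) - h (x + y)‖
            + ‖h (x + y) - ‖x‖ • h (‖x‖⁻¹ • x) - (1 - ‖x‖) • h (‖y‖⁻¹ • y)‖ :=
          norm_add_le _ _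
      _ ≤ 1 + 1 := add_le_add hB hA
      _ = 2 := by norm_num
  have hquas : ∀ x y : X, ‖F (x + y) - F x - F y‖ ≤ 2 * (‖x‖ + ‖y‖) := by
    intro x y
    rcases eq_or_lt_of_le (by positivity : (0 : ℝ) ≤ ‖x‖ + ‖y‖) with hs | hs
    · have hx : x = 0 := by
        have : ‖x‖ = 0 := by
          have := norm_nonneg x; have := norm_nonneg y; linarith
        exact norm_eq_zero.mp this
      have hy : y = 0 := by
        have : ‖y‖ = 0 := by
          have := norm_nonneg x; have := norm_nonneg y; linarith
        exact norm_eq_zero.mp this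
      subst hx; subst hy
      simp [hF0]
    · set s : ℝ := ‖x‖ + ‖y‖ with hsdef
      have hns : ‖s⁻¹ • x‖ + ‖s⁻¹ • y‖ = 1 := by
        rw [norm_smul, norm_smul, norm_inv, Real.norm_eq_abs, abs_of_pos hs]
        rw [← mul_add]
        exact inv_mul_cancel₀ hs.ne'
      have key := hquas1 (s⁻¹ • x) (s⁻¹ • y) hns
      have e0 : s⁻¹ • x + s⁻¹ • y = s⁻¹ • (x + y) := (smul_add _ _ _).symm
      rw [e0, hFhom, hFhom, hFhom] at key
      have e2 : s⁻¹ • F (x + y) - s⁻¹ • F x - s⁻¹ • F y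
          = s⁻¹ • (F (x + y) - F x - F y) := by module
      rw [e2, norm_smul, norm_inv, Real.norm_eq_abs, abs_of_pos hs] at key
      have := mul_le_mul_of_nonneg_left key hs.le
      rw [← mul_assoc, mul_inv_cancel₀ hs.ne', one_mul] at this
      linarith
  have hG : IsQuasilinearWith 1 (fun x => (2 : ℝ)⁻¹ • F x) := by
    constructor
    · intro c x
      simp only
      rw [hFhom, smul_comm]
    · intro x y
      simp only
      have e : (2 : ℝ)⁻¹ • F (x + y) - (2 : ℝ)⁻¹ • F x - (2 : ℝ)⁻¹ • F y
          = (2 : ℝ)⁻¹ • (F (x + y) - F x - F y) := by module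
      rw [e, norm_smul, norm_inv, Real.norm_eq_abs]
      have := hquas x y
      rw [abs_of_pos (by norm_num : (0:ℝ) < 2)]
      linarith
  obtain ⟨L, hL⟩ := hyp _ hG
  refine ⟨fun x => (2 : ℝ) • L x + f 0, ?_, ?_⟩
  · intro x y hx hy t ht0 ht1
    simp only [map_add, map_smul]
    module
  · intro x hx
    have h1 := hfh x hx
    have h2 : ‖h x - F x‖ ≤ 1 := by rw [norm_sub_rev]; exact hFh x hx
    have h3 := hL x
    have h3' : ‖F x - (2 : ℝ) • L x‖ ≤ 2 * K * ‖x‖ := by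
      have e : F x - (2 : ℝ) • L x = (2 : ℝ) • ((2 : ℝ)⁻¹ • F x - L x) := by module
      rw [e, norm_smul, Real.norm_eq_abs, abs_of_pos (by norm_num : (0:ℝ) < 2)]
      linarith
    have hsum : ‖f x - ((2 : ℝ) • L x + f 0)‖
        ≤ ‖f₀ x - h x‖ + ‖h x - F x‖ + ‖F x - (2 : ℝ) • L x‖ := by
      have e : f x - ((2 : ℝ) • L x + f 0)
          = (f₀ x - h x) + (h x - F x) + (F x - (2 : ℝ) • L x) := by
        simp only [hf0def]
        module
      rw [e]
      exact norm_add₃_le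
    have hKx : 2 * K * ‖x‖ ≤ 2 * K := by nlinarith [norm_nonneg x]
    linarith
end

section
/- Let X and Y be real Banach spaces and let B be the closed unit ball of X. Suppose A ≥ 0 is such that every uniformly bounded 1-affine function f : B → Y admits an affine function a : B → Y with ‖f(x) − a(x)‖ ≤ A for all x ∈ B. Then every quasilinear map F : X → Y with constant 1 which is bounded (i.e. ‖F(x)‖ ≤ C‖x‖ for some C and all x) admits a (not necessarily continuous) linear map L : X → Y such that ‖F(x) − L(x)‖ ≤ A‖x‖ for every x ∈ X. (In other words, K₀(X,Y) ≤ A₀(B,Y).) -/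
open Finset

variable {X Y : Type*} [NormedAddCommGroup X] [NormedSpace ℝ X] [CompleteSpace X]
  [NormedAddCommGroup Y] [NormedSpace ℝ Y] [CompleteSpace Y]

/-- `K₀(X,Y) ≤ A₀(B,Y)`. -/
theorem K0_le_A0 (A : ℝ) (hA : 0 ≤ A)
    (hyp : ∀ f : X → Y, (∃ M : ℝ, ∀ x : X, ‖x‖ ≤ 1 → ‖f x‖ ≤ M) →
      IsDeltaAffineOnBall 1 f →
      ∃ a : X → Y, IsAffineOnBall a ∧ ∀ x : X, ‖x‖ ≤ 1 → ‖f x - a x‖ ≤ A)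
    (F : X → Y) (hF : IsQuasilinearWith 1 F)
    (hFbdd : ∃ C : ℝ, ∀ x : X, ‖F x‖ ≤ C * ‖x‖) :
    ∃ L : X →ₗ[ℝ] Y, ∀ x : X, ‖F x - L x‖ ≤ A * ‖x‖ := by
  obtain ⟨hhom, hquasi⟩ := hF
  obtain ⟨C, hC⟩ := hFbdd
  have hFodd : ∀ x : X, F (-x) = -F x := by
    intro x
    have := hhom (-1) x
    simpa using this
  have hFaff : IsDeltaAffineOnBall 1 F := by
    intro x y hx hy t ht0 ht1
    have h := hquasi (t • x) ((1 - t) • y)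
    rw [hhom t x, hhom (1 - t) y] at h
    have hnx : ‖t • x‖ = t * ‖x‖ := by
      rw [norm_smul, Real.norm_eq_abs, abs_of_nonneg ht0]
    have hny : ‖(1 - t) • y‖ = (1 - t) * ‖y‖ := by
      rw [norm_smul, Real.norm_eq_abs, abs_of_nonneg (by linarith)]
    have hx0 := norm_nonneg x
    have hy0 := norm_nonneg y
    nlinarith [h]
  obtain ⟨a, haff, hclose⟩ := hyp F
    ⟨|C|, fun x hx => (hC x).trans (by
      calc C * ‖x‖ ≤ |C| * ‖x‖ := by
            have := norm_nonneg x
            nlinarith [le_abs_self C]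
        _ ≤ |C| * 1 := by nlinarith [abs_nonneg C]
        _ = |C| := by ring)⟩ hFaff
  set b : X → Y := fun x => (2 : ℝ)⁻¹ • (a x - a (-x)) with hb_def
  have hb_odd : ∀ x : X, b (-x) = -b x := by
    intro x
    simp only [hb_def, neg_neg]
    module
  have hb0 : b 0 = 0 := by
    have h := hb_odd 0
    simp only [neg_zero] at h
    have h2 : (2 : ℝ) • b 0 = 0 := by
      rw [two_smul]
      nth_rewrite 1 [h]
      abel
    simpa using (smul_eq_zero.mp h2).resolve_left (by norm_num)
  have hb_aff : IsAffineOnBall b := by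
    intro x y hx hy t ht0 ht1
    have h1 := haff x y hx hy t ht0 ht1
    have h2 := haff (-x) (-y) (by simpa using hx) (by simpa using hy) t ht0 ht1
    have hneg : t • (-x) + (1 - t) • (-y) = -(t • x + (1 - t) • y) := by module
    rw [hneg] at h2
    simp only [hb_def]
    rw [h1, h2]
    module
  have hb_close : ∀ x : X, ‖x‖ ≤ 1 → ‖F x - b x‖ ≤ A := by
    intro x hx
    have h1 := hclose x hx
    have h2 := hclose (-x) (by simpa using hx)
    have heq : F x - b x = (2 : ℝ)⁻¹ • (F x - a x) - (2 : ℝ)⁻¹ • (-F x - a (-x)) := by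
      simp only [hb_def]; module
    rw [heq]
    calc ‖(2 : ℝ)⁻¹ • (F x - a x) - (2 : ℝ)⁻¹ • (-F x - a (-x))‖
        ≤ ‖(2 : ℝ)⁻¹ • (F x - a x)‖ + ‖(2 : ℝ)⁻¹ • (-F x - a (-x))‖ := norm_sub_le _ _
      _ = (2 : ℝ)⁻¹ * ‖F x - a x‖ + (2 : ℝ)⁻¹ * ‖-F x - a (-x)‖ := by
          rw [norm_smul, norm_smul]; norm_num
      _ ≤ (2 : ℝ)⁻¹ * A + (2 : ℝ)⁻¹ * A := by
          have h3 : ‖-F x - a (-x)‖ = ‖F (-x) - a (-x)‖ := by rw [hFodd]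
          rw [h3]
          gcongr
      _ = A := by ring
  have hb_scale : ∀ x : X, ‖x‖ ≤ 1 → ∀ s : ℝ, 0 ≤ s → s ≤ 1 → b (s • x) = s • b x := by
    intro x hx s hs0 hs1
    have := hb_aff x 0 hx (by simp) s hs0 hs1
    simpa [hb0] using this
  -- representation function
  set g : X → Y := fun x => (‖x‖ + 1) • b ((‖x‖ + 1)⁻¹ • x) with hg_def
  have key : ∀ (x : X) (r r' : ℝ), 0 < r → r ≤ r' → ‖x‖ ≤ r →
      r' • b (r'⁻¹ • x) = r • b (r⁻¹ • x) := by
    intro x r r' hr hrr' hxr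
    have hr' : 0 < r' := lt_of_lt_of_le hr hrr'
    have hs0 : 0 ≤ r / r' := by positivity
    have hs1 : r / r' ≤ 1 := by
      rw [div_le_one hr']; exact hrr'
    have hnorm : ‖r⁻¹ • x‖ ≤ 1 := by
      rw [norm_smul, Real.norm_eq_abs, abs_of_pos (inv_pos.mpr hr)]
      rw [inv_mul_le_iff₀ hr]; simpa using hxr
    have hrne : r ≠ 0 := ne_of_gt hr
    have hrne' : r' ≠ 0 := ne_of_gt hr'
    have heq : r'⁻¹ • x = (r / r') • (r⁻¹ • x) := by
      rw [smul_smul]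
      rw [show r / r' * r⁻¹ = r'⁻¹ by field_simp]
    rw [heq, hb_scale _ hnorm _ hs0 hs1, smul_smul,
      show r' * (r / r') = r by field_simp]
  have hgr : ∀ (x : X) (r : ℝ), 0 < r → ‖x‖ ≤ r → g x = r • b (r⁻¹ • x) := by
    intro x r hr hxr
    have hpos : (0 : ℝ) < ‖x‖ + 1 := by positivity
    have hx1 : ‖x‖ ≤ ‖x‖ + 1 := by linarith
    have hbig : (0 : ℝ) < r + ‖x‖ + 1 := by positivity
    have h1 := key x (‖x‖ + 1) (r + ‖x‖ + 1) hpos (by linarith) hx1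
    have h2 := key x r (r + ‖x‖ + 1) hr (by linarith [norm_nonneg x]) hxr
    simp only [hg_def]
    rw [← h1, h2]
  have hg_odd : ∀ x : X, g (-x) = -g x := by
    intro x
    have hpos : (0 : ℝ) < ‖x‖ + 1 := by positivity
    have h1 : g (-x) = (‖x‖ + 1) • b ((‖x‖ + 1)⁻¹ • (-x)) :=
      hgr (-x) (‖x‖ + 1) hpos (by rw [norm_neg]; linarith)
    have h2 : g x = (‖x‖ + 1) • b ((‖x‖ + 1)⁻¹ • x) :=
      hgr x (‖x‖ + 1) hpos (by linarith)
    rw [h1, h2, smul_neg, hb_odd, smul_neg]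
  have hg_add : ∀ x y : X, g (x + y) = g x + g y := by
    intro x y
    set r : ℝ := ‖x‖ + ‖y‖ + 1 with hr_def
    have hr : (0 : ℝ) < r := by positivity
    have h2r : (0 : ℝ) < 2 * r := by positivity
    have hxy : ‖x + y‖ ≤ 2 * r := by
      calc ‖x + y‖ ≤ ‖x‖ + ‖y‖ := norm_add_le x y
        _ ≤ 2 * r := by simp only [hr_def]; nlinarith [norm_nonneg x, norm_nonneg y]
    have hx : ‖x‖ ≤ r := by simp only [hr_def]; linarith [norm_nonneg y]
    have hy : ‖y‖ ≤ r := by simp only [hr_def]; linarith [norm_nonneg x]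
    have hxu : ‖r⁻¹ • x‖ ≤ 1 := by
      rw [norm_smul, Real.norm_eq_abs, abs_of_pos (inv_pos.mpr hr), inv_mul_le_iff₀ hr]
      simpa using hx
    have hyu : ‖r⁻¹ • y‖ ≤ 1 := by
      rw [norm_smul, Real.norm_eq_abs, abs_of_pos (inv_pos.mpr hr), inv_mul_le_iff₀ hr]
      simpa using hy
    have hrne : r ≠ 0 := ne_of_gt hr
    have heq : (2 * r)⁻¹ • (x + y) =
        (2 : ℝ)⁻¹ • (r⁻¹ • x) + (1 - (2 : ℝ)⁻¹) • (r⁻¹ • y) := by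
      rw [smul_smul, smul_smul, smul_add,
        show (2 : ℝ)⁻¹ * r⁻¹ = (2 * r)⁻¹ by field_simp,
        show (1 - (2 : ℝ)⁻¹) * r⁻¹ = (2 * r)⁻¹ by field_simp; try ring]
    rw [hgr (x + y) (2 * r) h2r hxy, hgr x r hr hx, hgr y r hr hy, heq,
      hb_aff _ _ hxu hyu (2 : ℝ)⁻¹ (by norm_num) (by norm_num)]
    match_scalars <;> ring
  have hg_smul : ∀ (c : ℝ) (x : X), g (c • x) = c • g x := by
    intro c x
    rcases lt_trichotomy c 0 with hc | hc | hc
    · have h1 : c • x = (-c) • (-x) := by module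
      have hnc : (0 : ℝ) < -c := by linarith
      have hpos : (0 : ℝ) < ‖x‖ + 1 := by positivity
      have hbig : (0 : ℝ) < -c * (‖x‖ + 1) := by positivity
      have hnorm : ‖(-c) • (-x)‖ ≤ -c * (‖x‖ + 1) := by
        rw [norm_smul, Real.norm_eq_abs, abs_of_pos hnc, norm_neg]
        nlinarith
      have hcne : (-c : ℝ) ≠ 0 := ne_of_gt hnc
      have hpne : (‖x‖ + 1 : ℝ) ≠ 0 := ne_of_gt hpos
      have heq2 : (-c * (‖x‖ + 1))⁻¹ • ((-c) • (-x)) = (‖x‖ + 1)⁻¹ • (-x) := by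
        rw [smul_smul, show (-c * (‖x‖ + 1))⁻¹ * (-c) = (‖x‖ + 1)⁻¹ by rw [mul_inv, mul_comm ((-c)⁻¹), mul_assoc, inv_mul_cancel₀ hcne, mul_one]]
      have h4 : (‖x‖ + 1) • b ((‖x‖ + 1)⁻¹ • (-x)) = g (-x) :=
        (hgr (-x) (‖x‖ + 1) hpos (by rw [norm_neg]; linarith)).symm
      rw [h1, hgr _ _ hbig hnorm, heq2, mul_smul, h4, hg_odd]
      module
    · subst hc
      simp only [zero_smul]
      have h0 : g 0 = (1 : ℝ) • b ((1 : ℝ)⁻¹ • (0 : X)) := hgr 0 1 one_pos (by simp)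
      simp only [h0]
      simp [hb0]
    · have hpos : (0 : ℝ) < ‖x‖ + 1 := by positivity
      have hbig : (0 : ℝ) < c * (‖x‖ + 1) := by positivity
      have hnorm : ‖c • x‖ ≤ c * (‖x‖ + 1) := by
        rw [norm_smul, Real.norm_eq_abs, abs_of_pos hc]
        nlinarith
      have hcne : (c : ℝ) ≠ 0 := ne_of_gt hc
      have hpne : (‖x‖ + 1 : ℝ) ≠ 0 := ne_of_gt hpos
      have heq2 : (c * (‖x‖ + 1))⁻¹ • (c • x) = (‖x‖ + 1)⁻¹ • x := by
        rw [smul_smul, show (c * (‖x‖ + 1))⁻¹ * c = (‖x‖ + 1)⁻¹ by rw [mul_inv, mul_comm (c⁻¹), mul_assoc, inv_mul_cancel₀ hcne, mul_one]]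
      rw [hgr _ _ hbig hnorm, heq2, mul_smul,
        ← hgr x (‖x‖ + 1) hpos (by linarith)]
  refine ⟨{ toFun := g, map_add' := hg_add, map_smul' := fun c x => hg_smul c x }, ?_⟩
  intro x
  rcases eq_or_ne x 0 with rfl | hx
  · have hF0 : F 0 = 0 := by
      have := hhom 0 0
      simpa using this
    have hg0 : g 0 = 0 := by
      have := hg_smul 0 0
      simpa using this
    simp [hF0, hg0]
  · have hxpos : (0 : ℝ) < ‖x‖ := norm_pos_iff.mpr hx
    set u : X := ‖x‖⁻¹ • x with hu_def
    have hu : ‖u‖ = 1 := by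
      rw [hu_def, norm_smul, Real.norm_eq_abs, abs_of_pos (inv_pos.mpr hxpos)]
      field_simp
    have hFx : F x = ‖x‖ • F u := by
      rw [← hhom, hu_def, smul_smul]
      congr 1
      rw [mul_inv_cancel₀ (ne_of_gt hxpos), one_smul]
    show ‖F x - g x‖ ≤ A * ‖x‖
    have hgx' : g x = ‖x‖ • b u := hgr x ‖x‖ hxpos le_rfl
    rw [hFx, hgx', ← smul_sub, norm_smul, Real.norm_eq_abs, abs_of_pos hxpos]
    rw [mul_comm A ‖x‖]
    exact mul_le_mul_of_nonneg_left (hb_close u (le_of_eq hu)) (le_of_lt hxpos)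
end

section
/- Let X and Y be real Banach spaces and let B be the closed unit ball of X. Suppose K ≥ 0 is such that every bounded quasilinear map F : X → Y with constant 1 admits a (not necessarily continuous) linear map L : X → Y with ‖F(x) − L(x)‖ ≤ K‖x‖ for all x ∈ X. Then every uniformly bounded 1-affine function f : B → Y admits an affine function a : B → Y such that ‖f(x) − a(x)‖ ≤ 3 + 6K for all x ∈ B. (In other words, A₀(B,Y) ≤ 3 + 6K₀(X,Y).) -/
open Finset

variable {X Y : Type*} [NormedAddCommGroup X] [NormedSpace ℝ X] [CompleteSpace X]
  [NormedAddCommGroup Y] [NormedSpace ℝ Y] [CompleteSpace Y]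

set_option maxHeartbeats 1000000 in
/-- `A₀(B,Y) ≤ 3 + 6·K₀(X,Y)`. -/
theorem A0_le_three_add_six_K0 (K : ℝ) (hK : 0 ≤ K)
    (hyp : ∀ F : X → Y, IsQuasilinearWith 1 F → (∃ C : ℝ, ∀ x : X, ‖F x‖ ≤ C * ‖x‖) →
      ∃ L : X →ₗ[ℝ] Y, ∀ x : X, ‖F x - L x‖ ≤ K * ‖x‖)
    (f : X → Y) (hfbdd : ∃ M : ℝ, ∀ x : X, ‖x‖ ≤ 1 → ‖f x‖ ≤ M)
    (hf : IsDeltaAffineOnBall 1 f) :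
    ∃ a : X → Y, IsAffineOnBall a ∧ ∀ x : X, ‖x‖ ≤ 1 → ‖f x - a x‖ ≤ 3 + 6 * K := by
  obtain ⟨M, hM⟩ := hfbdd
  -- the odd part of f
  set g : X → Y := fun x => (2 : ℝ)⁻¹ • (f x - f (-x)) with hgdef
  have hg0 : g 0 = 0 := by simp [hgdef]
  have hgodd : ∀ x : X, g (-x) = -g x := by
    intro x; simp only [hgdef, neg_neg]; module
  -- g is 1-affine on the ball
  have hgaff : ∀ x y : X, ‖x‖ ≤ 1 → ‖y‖ ≤ 1 → ∀ t : ℝ, 0 ≤ t → t ≤ 1 →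
      ‖g (t • x + (1 - t) • y) - t • g x - (1 - t) • g y‖ ≤ 1 := by
    intro x y hx hy t ht0 ht1
    have h1 := hf x y hx hy t ht0 ht1
    have h2 := hf (-x) (-y) (by simpa using hx) (by simpa using hy) t ht0 ht1
    have hkey : g (t • x + (1 - t) • y) - t • g x - (1 - t) • g y =
        (2 : ℝ)⁻¹ • (f (t • x + (1 - t) • y) - t • f x - (1 - t) • f y)
        - (2 : ℝ)⁻¹ • (f (t • (-x) + (1 - t) • (-y)) - t • f (-x) - (1 - t) • f (-y)) := by
      have hneg : t • (-x) + (1 - t) • (-y) = -(t • x + (1 - t) • y) := by module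
      rw [hneg]
      simp only [hgdef]
      module
    rw [hkey]
    refine le_trans (norm_sub_le _ _) ?_
    rw [norm_smul, norm_smul]
    simp only [norm_inv, Real.norm_ofNat]
    linarith
  -- near homogeneity of g on the ball
  have hghom : ∀ x : X, ‖x‖ ≤ 1 → ∀ t : ℝ, 0 ≤ t → t ≤ 1 → ‖g (t • x) - t • g x‖ ≤ 1 := by
    intro x hx t ht0 ht1
    have := hgaff x 0 hx (by simp) t ht0 ht1
    simpa [hg0] using this
  -- bound for g on the ball
  have hgbd : ∀ x : X, ‖x‖ ≤ 1 → ‖g x‖ ≤ M := by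
    intro x hx
    have h1 := hM x hx
    have h2 := hM (-x) (by simpa using hx)
    have h3 : ‖f x - f (-x)‖ ≤ M + M := le_trans (norm_sub_le _ _) (by linarith)
    calc ‖g x‖ = (2:ℝ)⁻¹ * ‖f x - f (-x)‖ := by
          rw [hgdef]; rw [norm_smul]; simp
      _ ≤ (2:ℝ)⁻¹ * (M + M) := by
          have : (0:ℝ) ≤ (2:ℝ)⁻¹ := by norm_num
          exact mul_le_mul_of_nonneg_left h3 this
      _ = M := by ring
  -- the homogeneous extension
  set F : X → Y := fun x => ‖x‖ • g (‖x‖⁻¹ • x) with hFdef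
  have hF0 : F 0 = 0 := by simp [hFdef]
  have hFeq : ∀ x : X, F x = ‖x‖ • g (‖x‖⁻¹ • x) := fun x => rfl
  -- homogeneity for positive scalars
  have hFpos : ∀ (c : ℝ), 0 < c → ∀ x : X, x ≠ 0 → F (c • x) = c • F x := by
    intro c hc x hx
    have hs : (0:ℝ) < ‖x‖ := norm_pos_iff.mpr hx
    have h1 : ‖c • x‖ = c * ‖x‖ := by rw [norm_smul, Real.norm_eq_abs, abs_of_pos hc]
    have h2 : (‖c • x‖)⁻¹ • (c • x) = ‖x‖⁻¹ • x := by
      rw [h1, smul_smul]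
      have : (c * ‖x‖)⁻¹ * c = ‖x‖⁻¹ := by field_simp
      rw [this]
    rw [hFeq, hFeq, h2, h1, smul_smul]
    simp only [hgdef]
    module
  have hFneg : ∀ x : X, F (-x) = -F x := by
    intro x
    rcases eq_or_ne x 0 with rfl | hx
    · simp [hF0]
    rw [hFeq, hFeq, norm_neg, smul_neg, hgodd, smul_neg]
  have hFhom : ∀ (c : ℝ) (x : X), F (c • x) = c • F x := by
    intro c x
    rcases eq_or_ne x 0 with rfl | hx
    · simp [hF0]
    rcases lt_trichotomy c 0 with hc | rfl | hc
    · have h : c • x = (-c) • (-x) := by module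
      rw [h, hFpos (-c) (by linarith) (-x) (neg_ne_zero.mpr hx), hFneg]
      module
    · simp [hF0]
    · exact hFpos c hc x hx
  -- quasi-additivity with constant 2
  have hFq : ∀ x y : X, ‖F (x + y) - F x - F y‖ ≤ 2 * (‖x‖ + ‖y‖) := by
    intro x y
    rcases eq_or_ne x 0 with rfl | hx
    · rw [zero_add, hF0, sub_zero, sub_self, norm_zero]; positivity
    rcases eq_or_ne y 0 with rfl | hy
    · rw [add_zero, hF0, sub_zero, sub_self, norm_zero]; positivity
    rcases eq_or_ne (x + y) 0 with hxy | hxy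
    · have hyx : y = -x := by linear_combination (norm := module) hxy
      have hFy : F y = -F x := by rw [hyx, hFneg]
      rw [hxy, hFy, hF0]
      rw [show (0:Y) - F x - -F x = 0 by module, norm_zero]
      positivity
    · have hs : (0:ℝ) < ‖x‖ := norm_pos_iff.mpr hx
      have ht : (0:ℝ) < ‖y‖ := norm_pos_iff.mpr hy
      have hr : (0:ℝ) < ‖x + y‖ := norm_pos_iff.mpr hxy
      have hst : (0:ℝ) < ‖x‖ + ‖y‖ := by linarith
      have hrst : ‖x + y‖ ≤ ‖x‖ + ‖y‖ := norm_add_le x y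
      have hst' : ‖x‖ + ‖y‖ ≠ 0 := hst.ne'
      have hst'' : ‖y‖ + ‖x‖ ≠ 0 := by rw [add_comm]; exact hst'
      -- step A
      have hxunit : ‖‖x‖⁻¹ • x‖ ≤ 1 := by
        rw [norm_smul, Real.norm_eq_abs, abs_of_pos (by positivity), inv_mul_cancel₀ hs.ne']
      have hyunit : ‖‖y‖⁻¹ • y‖ ≤ 1 := by
        rw [norm_smul, Real.norm_eq_abs, abs_of_pos (by positivity), inv_mul_cancel₀ ht.ne']
      have hlam0 : (0:ℝ) ≤ ‖x‖ / (‖x‖ + ‖y‖) := by positivity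
      have hlam1 : ‖x‖ / (‖x‖ + ‖y‖) ≤ 1 := by rw [div_le_one hst]; linarith
      have hA := hgaff (‖x‖⁻¹ • x) (‖y‖⁻¹ • y) hxunit hyunit (‖x‖ / (‖x‖ + ‖y‖)) hlam0 hlam1
      have hcomb : (‖x‖ / (‖x‖ + ‖y‖)) • (‖x‖⁻¹ • x) + (1 - ‖x‖ / (‖x‖ + ‖y‖)) • (‖y‖⁻¹ • y)
          = (‖x‖ + ‖y‖)⁻¹ • (x + y) := by
        have h1 : (‖x‖ / (‖x‖ + ‖y‖)) * ‖x‖⁻¹ = (‖x‖ + ‖y‖)⁻¹ := by field_simp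
        have h2 : (1 - ‖x‖ / (‖x‖ + ‖y‖)) * ‖y‖⁻¹ = (‖x‖ + ‖y‖)⁻¹ := by field_simp; ring
        rw [smul_smul, smul_smul, h1, h2, ← smul_add]
      rw [hcomb] at hA
      -- step B
      have huunit : ‖‖x + y‖⁻¹ • (x + y)‖ ≤ 1 := by
        rw [norm_smul, Real.norm_eq_abs, abs_of_pos (by positivity), inv_mul_cancel₀ hr.ne']
      have hmu0 : (0:ℝ) ≤ ‖x + y‖ / (‖x‖ + ‖y‖) := by positivity
      have hmu1 : ‖x + y‖ / (‖x‖ + ‖y‖) ≤ 1 := by rw [div_le_one hst]; linarith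
      have hB := hgaff (‖x + y‖⁻¹ • (x + y)) 0 huunit (by simp) (‖x + y‖ / (‖x‖ + ‖y‖)) hmu0 hmu1
      have hcomb2 : (‖x + y‖ / (‖x‖ + ‖y‖)) • (‖x + y‖⁻¹ • (x + y))
            + (1 - ‖x + y‖ / (‖x‖ + ‖y‖)) • (0 : X)
          = (‖x‖ + ‖y‖)⁻¹ • (x + y) := by
        have h1 : (‖x + y‖ / (‖x‖ + ‖y‖)) * ‖x + y‖⁻¹ = (‖x‖ + ‖y‖)⁻¹ := by field_simp
        rw [smul_smul, h1, smul_zero, add_zero]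
      rw [hcomb2, hg0, smul_zero, sub_zero] at hB
      -- combine
      have hkey : F (x + y) - F x - F y = (‖x‖ + ‖y‖) •
          (((‖x + y‖ / (‖x‖ + ‖y‖)) • g (‖x + y‖⁻¹ • (x + y)) - g ((‖x‖ + ‖y‖)⁻¹ • (x + y)))
           + (g ((‖x‖ + ‖y‖)⁻¹ • (x + y)) - (‖x‖ / (‖x‖ + ‖y‖)) • g (‖x‖⁻¹ • x)
              - (1 - ‖x‖ / (‖x‖ + ‖y‖)) • g (‖y‖⁻¹ • y))) := by
        rw [hFeq (x + y), hFeq x, hFeq y]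
        match_scalars <;> (try field_simp) <;> ring
      rw [hkey, norm_smul, Real.norm_eq_abs, abs_of_pos hst]
      have hsum : ‖((‖x + y‖ / (‖x‖ + ‖y‖)) • g (‖x + y‖⁻¹ • (x + y))
              - g ((‖x‖ + ‖y‖)⁻¹ • (x + y)))
           + (g ((‖x‖ + ‖y‖)⁻¹ • (x + y)) - (‖x‖ / (‖x‖ + ‖y‖)) • g (‖x‖⁻¹ • x)
              - (1 - ‖x‖ / (‖x‖ + ‖y‖)) • g (‖y‖⁻¹ • y))‖ ≤ 2 := by
        refine le_trans (norm_add_le _ _) ?_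
        have hB' : ‖(‖x + y‖ / (‖x‖ + ‖y‖)) • g (‖x + y‖⁻¹ • (x + y))
            - g ((‖x‖ + ‖y‖)⁻¹ • (x + y))‖ ≤ 1 := by
          rw [norm_sub_rev]; exact hB
        linarith [hA, hB']
      nlinarith [hsum, hst, norm_nonneg (((‖x + y‖ / (‖x‖ + ‖y‖)) • g (‖x + y‖⁻¹ • (x + y))
              - g ((‖x‖ + ‖y‖)⁻¹ • (x + y)))
           + (g ((‖x‖ + ‖y‖)⁻¹ • (x + y)) - (‖x‖ / (‖x‖ + ‖y‖)) • g (‖x‖⁻¹ • x)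
              - (1 - ‖x‖ / (‖x‖ + ‖y‖)) • g (‖y‖⁻¹ • y)))]
  -- boundedness of F
  have hFbd : ∀ x : X, ‖F x‖ ≤ M * ‖x‖ := by
    intro x
    rcases eq_or_ne x 0 with rfl | hx
    · rw [hF0, norm_zero, norm_zero, mul_zero]
    · have hs : (0:ℝ) < ‖x‖ := norm_pos_iff.mpr hx
      have hunit : ‖‖x‖⁻¹ • x‖ ≤ 1 := by
        rw [norm_smul, Real.norm_eq_abs, abs_of_pos (by positivity), inv_mul_cancel₀ hs.ne']
      calc ‖F x‖ = ‖x‖ * ‖g (‖x‖⁻¹ • x)‖ := by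
            rw [hFeq, norm_smul, Real.norm_eq_abs, abs_of_pos hs]
        _ ≤ ‖x‖ * M := mul_le_mul_of_nonneg_left (hgbd _ hunit) hs.le
        _ = M * ‖x‖ := by ring
  -- apply hyp to F/2
  have hq : IsQuasilinearWith 1 (fun x => (2:ℝ)⁻¹ • F x) := by
    constructor
    · intro c x
      simp only
      rw [hFhom c x, smul_comm]
    · intro x y
      simp only
      have h := hFq x y
      have he : (2:ℝ)⁻¹ • F (x + y) - (2:ℝ)⁻¹ • F x - (2:ℝ)⁻¹ • F y
          = (2:ℝ)⁻¹ • (F (x + y) - F x - F y) := by module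
      rw [he, norm_smul]
      simp only [norm_inv, Real.norm_ofNat]
      calc (2:ℝ)⁻¹ * ‖F (x + y) - F x - F y‖
          ≤ (2:ℝ)⁻¹ * (2 * (‖x‖ + ‖y‖)) := mul_le_mul_of_nonneg_left h (by norm_num)
        _ = 1 * (‖x‖ + ‖y‖) := by ring
  have hb2 : ∀ x : X, ‖(2:ℝ)⁻¹ • F x‖ ≤ M * ‖x‖ := by
    intro x
    have h := hFbd x
    have hnn : (0:ℝ) ≤ M * ‖x‖ := le_trans (norm_nonneg _) h
    rw [norm_smul]
    simp only [norm_inv, Real.norm_ofNat]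
    nlinarith [norm_nonneg (F x)]
  obtain ⟨L, hL⟩ := hyp (fun x => (2:ℝ)⁻¹ • F x) hq ⟨M, hb2⟩
  refine ⟨fun x => (2:ℝ) • L x + f 0, ?_, ?_⟩
  · intro x y hx hy t ht0 ht1
    simp only [map_add, map_smul]
    module
  · intro x hx
    -- three pieces
    have h1 : ‖f x - g x - f 0‖ ≤ 1 := by
      have h := hf x (-x) hx (by simpa using hx) (2:ℝ)⁻¹ (by norm_num) (by norm_num)
      have hz : (2:ℝ)⁻¹ • x + (1 - (2:ℝ)⁻¹) • (-x) = (0 : X) := by module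
      rw [hz] at h
      have hkey : f x - g x - f 0 =
          -(f 0 - (2:ℝ)⁻¹ • f x - (1 - (2:ℝ)⁻¹) • f (-x)) := by
        simp only [hgdef]
        module
      rw [hkey, norm_neg]
      exact h
    have h2 : ‖g x - F x‖ ≤ 1 := by
      rcases eq_or_ne x 0 with rfl | hx0
      · simp [hg0, hF0]
      · have hs : (0:ℝ) < ‖x‖ := norm_pos_iff.mpr hx0
        have hunit : ‖‖x‖⁻¹ • x‖ ≤ 1 := by
          rw [norm_smul, Real.norm_eq_abs, abs_of_pos (by positivity), inv_mul_cancel₀ hs.ne']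
        have h := hghom (‖x‖⁻¹ • x) hunit ‖x‖ (norm_nonneg x) hx
        rw [smul_smul, mul_inv_cancel₀ hs.ne', one_smul] at h
        rw [hFeq]
        exact h
    have h3 : ‖F x - (2:ℝ) • L x‖ ≤ 2 * K := by
      have h := hL x
      have he : F x - (2:ℝ) • L x = (2:ℝ) • ((2:ℝ)⁻¹ • F x - L x) := by module
      calc ‖F x - (2:ℝ) • L x‖ = 2 * ‖(2:ℝ)⁻¹ • F x - L x‖ := by
            rw [he, norm_smul]; simp
        _ ≤ 2 * (K * ‖x‖) := mul_le_mul_of_nonneg_left h (by norm_num)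
        _ ≤ 2 * (K * 1) := by
            have : K * ‖x‖ ≤ K * 1 := mul_le_mul_of_nonneg_left hx hK
            linarith
        _ = 2 * K := by ring
    calc ‖f x - ((2:ℝ) • L x + f 0)‖
        = ‖(f x - g x - f 0) + (g x - F x) + (F x - (2:ℝ) • L x)‖ := by
          congr 1; module
      _ ≤ ‖(f x - g x - f 0) + (g x - F x)‖ + ‖F x - (2:ℝ) • L x‖ := norm_add_le _ _
      _ ≤ (‖f x - g x - f 0‖ + ‖g x - F x‖) + ‖F x - (2:ℝ) • L x‖ := by
          have := norm_add_le (f x - g x - f 0) (g x - F x)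
          linarith
      _ ≤ 3 + 6 * K := by linarith
end

section
/- Let X and Y be real Banach spaces, K ≥ 0, and let F : X → Y be a quasilinear map satisfying ‖F(x₁ + ⋯ + xₙ) − (F(x₁) + ⋯ + F(xₙ))‖ ≤ 2K(‖x₁‖ + ⋯ + ‖xₙ‖) for every finite family x₁, …, xₙ ∈ X. Define ‖(y,x)‖_F = ‖y − F(x)‖ + ‖x‖ on Y × X. Then for every finite family (y₁,x₁), …, (yₙ,xₙ) in Y × X one has ‖(y₁,x₁) + ⋯ + (yₙ,xₙ)‖_F ≤ (2K+1)(‖(y₁,x₁)‖_F + ⋯ + ‖(yₙ,xₙ)‖_F); consequently the norm |(y,x)|_co = inf{ Σᵢ ‖(yᵢ,xᵢ)‖_F : (y,x) = Σᵢ (yᵢ,xᵢ) } satisfies |(y,x)|_co ≤ ‖(y,x)‖_F ≤ (2K+1)|(y,x)|_co for all (y,x) ∈ Y × X. -/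
open Finset

variable {X Y : Type*} [NormedAddCommGroup X] [NormedSpace ℝ X] [CompleteSpace X]
  [NormedAddCommGroup Y] [NormedSpace ℝ Y] [CompleteSpace Y]

/-- The twisted-sum quasi-norm `‖(y,x)‖_F = ‖y - F x‖ + ‖x‖` on `Y × X`. -/
noncomputable def tsNorm (F : X → Y) (z : Y × X) : ℝ := ‖z.1 - F z.2‖ + ‖z.2‖

/-- The associated "convexified" norm
`|(y,x)|_co = inf { Σᵢ ‖(yᵢ,xᵢ)‖_F : (y,x) = Σᵢ (yᵢ,xᵢ) }`. -/
noncomputable def coNorm (F : X → Y) (z : Y × X) : ℝ :=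
  sInf {s : ℝ | ∃ (n : ℕ) (p : Fin n → Y × X), ∑ i, p i = z ∧ s = ∑ i, tsNorm F (p i)}

/-- if a quasilinear map `F` satisfies the finite-sum estimate with
constant `2K`, then `‖·‖_F` satisfies the finite triangle inequality with constant
`2K + 1` and hence is `(2K+1)`-equivalent to the norm `|·|_co`. -/
theorem tsNorm_sum_estimate_and_coNorm_equiv (K : ℝ) (hK : 0 ≤ K) (F : X → Y)
    (hF : ∃ Q : ℝ, IsQuasilinearWith Q F)
    (hsum : ∀ (n : ℕ) (x : Fin n → X),
      ‖F (∑ i, x i) - ∑ i, F (x i)‖ ≤ 2 * K * ∑ i, ‖x i‖) :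
    (∀ (n : ℕ) (p : Fin n → Y × X),
      tsNorm F (∑ i, p i) ≤ (2 * K + 1) * ∑ i, tsNorm F (p i)) ∧
    ∀ z : Y × X, coNorm F z ≤ tsNorm F z ∧ tsNorm F z ≤ (2 * K + 1) * coNorm F z := by
  have h2K : (0:ℝ) < 2 * K + 1 := by linarith
  have tsnn : ∀ z : Y × X, 0 ≤ tsNorm F z := fun z =>
    add_nonneg (norm_nonneg _) (norm_nonneg _)
  have part1 : ∀ (n : ℕ) (p : Fin n → Y × X),
      tsNorm F (∑ i, p i) ≤ (2 * K + 1) * ∑ i, tsNorm F (p i) := by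
    intro n p
    have hsx : (∑ i, p i).2 = ∑ i, (p i).2 := Prod.snd_sum ..
    have hsy : (∑ i, p i).1 = ∑ i, (p i).1 := Prod.fst_sum ..
    have key : ‖(∑ i, (p i).1) - F (∑ i, (p i).2)‖ ≤
        (∑ i, ‖(p i).1 - F ((p i).2)‖) + 2 * K * ∑ i, ‖(p i).2‖ := by
      have hdecomp : (∑ i, (p i).1) - F (∑ i, (p i).2) =
          (∑ i, ((p i).1 - F ((p i).2))) +
            ((∑ i, F ((p i).2)) - F (∑ i, (p i).2)) := by
        rw [Finset.sum_sub_distrib]; abel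
      calc ‖(∑ i, (p i).1) - F (∑ i, (p i).2)‖
          ≤ ‖∑ i, ((p i).1 - F ((p i).2))‖ +
            ‖(∑ i, F ((p i).2)) - F (∑ i, (p i).2)‖ := by
            rw [hdecomp]; exact norm_add_le _ _
        _ ≤ (∑ i, ‖(p i).1 - F ((p i).2)‖) + 2 * K * ∑ i, ‖(p i).2‖ := by
            refine add_le_add (norm_sum_le _ _) ?_
            rw [norm_sub_rev]
            exact hsum n (fun i => (p i).2)
    have hx : ‖∑ i, (p i).2‖ ≤ ∑ i, ‖(p i).2‖ := norm_sum_le _ _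
    have hA : 0 ≤ ∑ i, ‖(p i).1 - F ((p i).2)‖ :=
      Finset.sum_nonneg fun i _ => norm_nonneg _
    have hB : 0 ≤ ∑ i, ‖(p i).2‖ := Finset.sum_nonneg fun i _ => norm_nonneg _
    unfold tsNorm
    rw [hsx, hsy, Finset.sum_add_distrib]
    nlinarith
  refine ⟨part1, fun z => ?_⟩
  set S := {s : ℝ | ∃ (n : ℕ) (p : Fin n → Y × X), ∑ i, p i = z ∧ s = ∑ i, tsNorm F (p i)}
    with hS
  have hmem : tsNorm F z ∈ S := by
    refine ⟨1, fun _ => z, ?_, ?_⟩ <;> simp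
  have hbdd : BddBelow S := by
    refine ⟨0, fun s hs => ?_⟩
    obtain ⟨n, p, -, rfl⟩ := hs
    exact Finset.sum_nonneg fun i _ => tsnn _
  constructor
  · exact csInf_le hbdd hmem
  · have hlb : ∀ s ∈ S, tsNorm F z / (2 * K + 1) ≤ s := by
      intro s hs
      obtain ⟨n, p, hpz, rfl⟩ := hs
      rw [div_le_iff₀ h2K, mul_comm]
      have := part1 n p
      rwa [hpz] at this
    have := le_csInf ⟨_, hmem⟩ hlb
    rw [div_le_iff₀ h2K] at this
    calc tsNorm F z ≤ sInf S * (2 * K + 1) := this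
      _ = (2 * K + 1) * coNorm F z := by rw [mul_comm]; rfl
end
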